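/- (Condition for reducibility — probabilistic core.) Let C = C₁ ⊔ C₂ and C' be finite sets, p⁽¹⁾ ∈ [0,1], p⁽²⁾ ∈ (0,1]. Let Γ: 2^C → 2^{C'} satisfy: (i) Γ(A) = ⋃_{i∈A} Γ({i}) and Γ(∅) = ∅; (ii) |Γ({i})| ≤ c_fw for all i ∈ C; (iii) for each j ∈ C', |{i ∈ C₁ : j ∈ Γ({i})}| ≤ c_bw⁽¹⁾ and |{i ∈ C₂ : j ∈ Γ({i})}| ≤ c_bw⁽²⁾, where c_fw, c_bw⁽¹⁾, c_bw⁽²⁾ are positive integers. Suppose the random subset F ⊆ C satisfies ℙ[F ∩ C₁ ⊇ A₁ and F ∩ C₂ ⊇ A₂] ≤ (p⁽¹⁾)^{|A₁|}(p⁽²⁾)^{|A₂|} for all A₁ ⊆ C₁, A₂ ⊆ C₂. Then for every nonempty A' ⊆ C', ℙ[Γ(F) ⊇ A'] ≤ q^{|A'|}, where q = 2^{c_bw⁽²⁾}(1 + p⁽¹⁾/p⁽²⁾)^{c_bw⁽¹⁾}(p⁽²⁾)^{1/c_fw} + 2^{c_bw⁽¹⁾}(p⁽¹⁾)^{1/c_fw}.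 -/

import Mathlib

open scoped Classical

/-- Probability that a random subset (given by a probability mass function `μ` on `Finset ι`)
satisfies the event `E`. -/
noncomputable def prob {ι : Type*} [Fintype ι] (μ : Finset ι → ℝ) (E : Finset ι → Prop) : ℝ :=
  ∑ F : Finset ι, if E F then μ F else 0

/-- `μ` is a probability mass function on subsets of the finite set of locations `ι`. -/
def IsPMF {ι : Type*} [Fintype ι] (μ : Finset ι → ℝ) : Prop :=
  (∀ F, 0 ≤ μ F) ∧ ∑ F : Finset ι, μ F = 1

private lemma prob_mono {ι : Type*} [Fintype ι] (μ : Finset ι → ℝ) (hμ : ∀ F, 0 ≤ μ F)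
    {E₁ E₂ : Finset ι → Prop} (h : ∀ F, E₁ F → E₂ F) : prob μ E₁ ≤ prob μ E₂ := by
  apply Finset.sum_le_sum
  intro F _
  by_cases h1 : E₁ F
  · rw [if_pos h1, if_pos (h F h1)]
  · rw [if_neg h1]
    split_ifs with h2
    · exact hμ F
    · exact le_rfl

private lemma prob_or_le {ι : Type*} [Fintype ι] (μ : Finset ι → ℝ) (hμ : ∀ F, 0 ≤ μ F)
    (E₁ E₂ : Finset ι → Prop) :
    prob μ (fun F => E₁ F ∨ E₂ F) ≤ prob μ E₁ + prob μ E₂ := by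
  unfold prob
  rw [← Finset.sum_add_distrib]
  apply Finset.sum_le_sum
  intro F _
  by_cases h1 : E₁ F <;> by_cases h2 : E₂ F <;>
    simp only [h1, h2, or_self, or_true, true_or, false_or, if_true, if_false] <;>
    linarith [hμ F]

private lemma prob_exists_le {ι : Type*} {κ : Type*} [Fintype ι] (μ : Finset ι → ℝ)
    (hμ : ∀ F, 0 ≤ μ F) (S : Finset κ) (P : κ → Finset ι → Prop) :
    prob μ (fun F => ∃ x ∈ S, P x F) ≤ ∑ x ∈ S, prob μ (P x) := by
  unfold prob
  rw [Finset.sum_comm]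
  apply Finset.sum_le_sum
  intro F _
  by_cases h : ∃ x ∈ S, P x F
  · rw [if_pos h]
    obtain ⟨x, hxS, hx⟩ := h
    calc μ F = if P x F then μ F else 0 := by rw [if_pos hx]
    _ ≤ ∑ y ∈ S, if P y F then μ F else 0 :=
        Finset.single_le_sum (f := fun y => if P y F then μ F else 0)
          (fun y _ => by split_ifs with hy; exacts [hμ F, le_rfl]) hxS
  · rw [if_neg h]
    apply Finset.sum_nonneg
    intro y _
    split_ifs with hy
    exacts [hμ F, le_rfl]

private lemma choose_le_two_pow (n k : ℕ) : n.choose k ≤ 2 ^ n := by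
  rcases le_or_gt k n with h | h
  · calc n.choose k ≤ ∑ m ∈ Finset.range (n + 1), n.choose m :=
        Finset.single_le_sum (fun m _ => Nat.zero_le _) (by simp [Nat.lt_succ_iff, h])
    _ = 2 ^ n := Nat.sum_range_choose n
  · simp [Nat.choose_eq_zero_of_lt h]

/-- binomial tail bound : `∑_{m < N} C(L,m) x^m ≤ (1+x)^L` for `x ≥ 0`. -/
private lemma sum_choose_le (x : ℝ) (hx : 0 ≤ x) (N L : ℕ) :
    ∑ m ∈ Finset.range N, (L.choose m : ℝ) * x ^ m ≤ (1 + x) ^ L := by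
  have h1 : ∑ m ∈ Finset.range N, (L.choose m : ℝ) * x ^ m
      ≤ ∑ m ∈ Finset.range (max N (L + 1)), (L.choose m : ℝ) * x ^ m := by
    apply Finset.sum_le_sum_of_subset_of_nonneg
    · exact Finset.range_subset_range.2 (le_max_left _ _)
    · intro m _ _
      positivity
  have h2 : ∑ m ∈ Finset.range (max N (L + 1)), (L.choose m : ℝ) * x ^ m
      = ∑ m ∈ Finset.range (L + 1), (L.choose m : ℝ) * x ^ m := by
    symm
    apply Finset.sum_subset (Finset.range_subset_range.2 (le_max_right _ _))
    intro m _ hm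
    simp only [Finset.mem_range, not_lt] at hm
    have hz : L.choose m = 0 := Nat.choose_eq_zero_of_lt (by omega)
    simp [hz]
  have h3 : (1 + x) ^ L = ∑ m ∈ Finset.range (L + 1), (L.choose m : ℝ) * x ^ m := by
    rw [add_comm 1 x, add_pow]
    apply Finset.sum_congr rfl
    intro m _; ring
  rw [h3]; rw [h2] at h1; exact h1

private lemma rpow_key (p : ℝ) (hp0 : 0 ≤ p) (hp1 : p ≤ 1) (cfw k₀ a : ℕ)
    (hcfw : 0 < cfw) (ha : 1 ≤ a) (hak : a ≤ cfw * k₀) :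
    p ^ k₀ ≤ (Real.rpow p (1 / (cfw : ℝ))) ^ a := by
  rw [Real.rpow_eq_pow]
  have hcfwR : (0:ℝ) < (cfw:ℝ) := by exact_mod_cast hcfw
  have hk₀ : 1 ≤ k₀ := by
    rcases Nat.eq_zero_or_pos k₀ with h | h
    · subst h; omega
    · exact h
  rcases eq_or_lt_of_le hp0 with h | h
  · rw [← h, Real.zero_rpow (one_div_ne_zero (ne_of_gt hcfwR))]
    simp [zero_pow (by omega : k₀ ≠ 0), zero_pow (by omega : a ≠ 0)]
  · have hRHS : (p ^ ((1:ℝ) / (cfw : ℝ))) ^ a = p ^ ((1 / (cfw : ℝ)) * (a:ℝ)) := by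
      rw [Real.rpow_mul hp0, ← Real.rpow_natCast (p ^ ((1:ℝ) / (cfw:ℝ))) a]
    rw [hRHS, ← Real.rpow_natCast p k₀]
    apply Real.rpow_le_rpow_of_exponent_ge h hp1
    rw [div_mul_eq_mul_div, one_mul, div_le_iff₀ (by positivity)]
    calc (a : ℝ) ≤ (cfw : ℝ) * k₀ := by exact_mod_cast hak
    _ = (k₀ : ℝ) * cfw := by ring

private lemma ceil_div_le_iff (a cfw m : ℕ) (hcfw : 0 < cfw) :
    (a + cfw - 1) / cfw ≤ m ↔ a ≤ cfw * m := by
  rw [Nat.div_le_iff_le_mul_add_pred hcfw]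
  generalize cfw * m = t
  omega

/-- Condition for reducibility (probabilistic core, Lemma "Condition for reducibility"):
under the forward/backward propagation-count conditions on `Γ` and the two-parameter
local stochastic condition on `F`, for every nonempty `A' ⊆ C'` one has
`ℙ[Γ(F) ⊇ A'] ≤ q^{|A'|}` with
`q = 2^{c_bw⁽²⁾}(1 + p⁽¹⁾/p⁽²⁾)^{c_bw⁽¹⁾}(p⁽²⁾)^{1/c_fw} + 2^{c_bw⁽¹⁾}(p⁽¹⁾)^{1/c_fw}`. -/
theorem condition_for_reducibility {ι ι' : Type*} [Fintype ι] [Fintype ι']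
    (C₁ C₂ : Finset ι) (hdisj : Disjoint C₁ C₂) (hunion : C₁ ∪ C₂ = Finset.univ)
    (Γ : Finset ι → Finset ι')
    (cfw cbw₁ cbw₂ : ℕ) (hcfw : 0 < cfw) (hcbw₁ : 0 < cbw₁) (hcbw₂ : 0 < cbw₂)
    (hΓ : ∀ A : Finset ι, Γ A = A.biUnion (fun i => Γ {i}))
    (hΓempty : Γ ∅ = ∅)
    (hfw : ∀ i : ι, (Γ {i}).card ≤ cfw)
    (hbw₁ : ∀ j : ι', (C₁.filter (fun i => j ∈ Γ {i})).card ≤ cbw₁)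
    (hbw₂ : ∀ j : ι', (C₂.filter (fun i => j ∈ Γ {i})).card ≤ cbw₂)
    (p₁ p₂ : ℝ) (hp₁0 : 0 ≤ p₁) (hp₁1 : p₁ ≤ 1) (hp₂0 : 0 < p₂) (hp₂1 : p₂ ≤ 1)
    (μ : Finset ι → ℝ) (hμ : IsPMF μ)
    (hls : ∀ A₁ ⊆ C₁, ∀ A₂ ⊆ C₂,
      prob μ (fun F => A₁ ⊆ F ∩ C₁ ∧ A₂ ⊆ F ∩ C₂) ≤ p₁ ^ A₁.card * p₂ ^ A₂.card)
    (A' : Finset ι') (hA' : A'.Nonempty) :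
    prob μ (fun F => A' ⊆ Γ F)
      ≤ ((2 : ℝ) ^ cbw₂ * (1 + p₁ / p₂) ^ cbw₁ * Real.rpow p₂ (1 / cfw)
          + (2 : ℝ) ^ cbw₁ * Real.rpow p₁ (1 / cfw)) ^ A'.card := by
  classical
  simp only [Real.rpow_eq_pow]
  obtain ⟨hμ0, hμ1⟩ := hμ
  set a := A'.card with ha_def
  have ha1 : 1 ≤ a := Finset.card_pos.2 hA'
  set k₀ := (a + cfw - 1) / cfw with hk₀_def
  have hk₀le : ∀ m : ℕ, k₀ ≤ m ↔ a ≤ cfw * m := fun m => ceil_div_le_iff a cfw m hcfw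
  have hak₀ : a ≤ cfw * k₀ := (hk₀le k₀).1 le_rfl
  -- the backward neighborhood Λ(A')
  set Λ : Finset ι := Finset.univ.filter (fun i => ((Γ {i}) ∩ A').Nonempty) with hΛ_def
  -- cardinality bounds on Λ ∩ C₁, Λ ∩ C₂
  have hΛcard : ∀ (C : Finset ι) (cbw : ℕ),
      (∀ j : ι', (C.filter (fun i => j ∈ Γ {i})).card ≤ cbw) →
      (Λ ∩ C).card ≤ cbw * a := by
    intro C cbw hbw
    have hsub : Λ ∩ C ⊆ A'.biUnion (fun j => C.filter (fun i => j ∈ Γ {i})) := by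
      intro i hi
      rw [Finset.mem_inter] at hi
      obtain ⟨hiΛ, hiC⟩ := hi
      rw [hΛ_def, Finset.mem_filter] at hiΛ
      obtain ⟨j, hj⟩ := hiΛ.2
      rw [Finset.mem_inter] at hj
      exact Finset.mem_biUnion.2 ⟨j, hj.2, Finset.mem_filter.2 ⟨hiC, hj.1⟩⟩
    calc (Λ ∩ C).card ≤ (A'.biUnion (fun j => C.filter (fun i => j ∈ Γ {i}))).card :=
        Finset.card_le_card hsub
    _ ≤ ∑ j ∈ A', (C.filter (fun i => j ∈ Γ {i})).card := Finset.card_biUnion_le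
    _ ≤ ∑ _j ∈ A', cbw := Finset.sum_le_sum (fun j _ => hbw j)
    _ = cbw * a := by rw [Finset.sum_const, smul_eq_mul, mul_comm]
  have hL₁ : (Λ ∩ C₁).card ≤ cbw₁ * a := hΛcard C₁ cbw₁ hbw₁
  have hL₂ : (Λ ∩ C₂).card ≤ cbw₂ * a := hΛcard C₂ cbw₂ hbw₂
  set L₁ := (Λ ∩ C₁).card with hL₁_def
  set L₂ := (Λ ∩ C₂).card with hL₂_def
  -- the two events
  set E₁ : Finset ι → Prop :=
    fun F => ∃ A₁ ∈ (Λ ∩ C₁).powersetCard k₀, A₁ ⊆ F with hE₁_def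
  set E₂ : Finset ι → Prop :=
    fun F => ∃ m ∈ Finset.range k₀,
      ∃ P ∈ (Λ ∩ C₁).powersetCard m ×ˢ (Λ ∩ C₂).powersetCard (k₀ - m),
        P.1 ⊆ F ∧ P.2 ⊆ F with hE₂_def
  -- the main event implies E₁ ∨ E₂
  have hsplit : ∀ F : Finset ι, A' ⊆ Γ F → E₁ F ∨ E₂ F := by
    intro F hF
    set G := F ∩ Λ with hG_def
    have hcover : A' ⊆ G.biUnion (fun i => Γ {i}) := by
      intro j hj
      have := hF hj
      rw [hΓ F, Finset.mem_biUnion] at this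
      obtain ⟨i, hiF, hji⟩ := this
      refine Finset.mem_biUnion.2 ⟨i, ?_, hji⟩
      rw [hG_def, Finset.mem_inter]
      exact ⟨hiF, Finset.mem_filter.2 ⟨Finset.mem_univ i,
        ⟨j, Finset.mem_inter.2 ⟨hji, hj⟩⟩⟩⟩
    have hGcard : a ≤ cfw * G.card := by
      calc a ≤ (G.biUnion (fun i => Γ {i})).card := Finset.card_le_card hcover
      _ ≤ ∑ i ∈ G, (Γ {i}).card := Finset.card_biUnion_le
      _ ≤ ∑ _i ∈ G, cfw := Finset.sum_le_sum (fun i _ => hfw i)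
      _ = cfw * G.card := by rw [Finset.sum_const, smul_eq_mul, mul_comm]
    have hk₀G : k₀ ≤ G.card := (hk₀le G.card).2 hGcard
    have hGsplit : G.card = (G ∩ C₁).card + (G ∩ C₂).card := by
      rw [← Finset.card_union_of_disjoint
        (Finset.disjoint_left.2 (fun i h1 h2 => Finset.disjoint_left.1 hdisj
          (Finset.mem_inter.1 h1).2 (Finset.mem_inter.1 h2).2))]
      congr 1
      rw [← Finset.inter_union_distrib_left, hunion, Finset.inter_univ]
    by_cases hcase : k₀ ≤ (G ∩ C₁).card
    · left
      obtain ⟨A₁, hA₁sub, hA₁card⟩ := Finset.exists_subset_card_eq hcase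
      refine ⟨A₁, Finset.mem_powersetCard.2 ⟨?_, hA₁card⟩, ?_⟩
      · intro i hi
        have := hA₁sub hi
        rw [Finset.mem_inter] at this ⊢
        rw [hG_def, Finset.mem_inter] at this
        exact ⟨this.1.2, this.2⟩
      · intro i hi
        have := hA₁sub hi
        rw [Finset.mem_inter, hG_def, Finset.mem_inter] at this
        exact this.1.1
    · right
      push_neg at hcase
      set m := (G ∩ C₁).card with hm_def
      have hm2 : k₀ - m ≤ (G ∩ C₂).card := by omega
      obtain ⟨A₂, hA₂sub, hA₂card⟩ := Finset.exists_subset_card_eq hm2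
      refine ⟨m, Finset.mem_range.2 hcase, ⟨G ∩ C₁, A₂⟩, ?_, ?_, ?_⟩
      · rw [Finset.mem_product]
        constructor
        · refine Finset.mem_powersetCard.2 ⟨?_, rfl⟩
          intro i hi
          rw [Finset.mem_inter] at hi ⊢
          rw [hG_def, Finset.mem_inter] at hi
          exact ⟨hi.1.2, hi.2⟩
        · refine Finset.mem_powersetCard.2 ⟨?_, hA₂card⟩
          intro i hi
          have := hA₂sub hi
          rw [Finset.mem_inter] at this ⊢
          rw [hG_def, Finset.mem_inter] at this
          exact ⟨this.1.2, this.2⟩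
      · intro i hi
        rw [Finset.mem_inter, hG_def, Finset.mem_inter] at hi
        exact hi.1.1
      · intro i hi
        have := hA₂sub hi
        rw [Finset.mem_inter, hG_def, Finset.mem_inter] at this
        exact this.1.1
  -- the two pieces of the bound
  set X : ℝ := (2 : ℝ) ^ cbw₂ * (1 + p₁ / p₂) ^ cbw₁ * p₂ ^ ((1:ℝ) / (cfw:ℝ)) with hX_def
  set Y : ℝ := (2 : ℝ) ^ cbw₁ * p₁ ^ ((1:ℝ) / (cfw:ℝ)) with hY_def
  have hp₁p₂ : (0:ℝ) ≤ p₁ / p₂ := by positivity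
  have hXnn : 0 ≤ X := by
    rw [hX_def]
    have := Real.rpow_nonneg hp₂0.le (1 / (cfw:ℝ))
    positivity
  have hYnn : 0 ≤ Y := by
    rw [hY_def]
    have := Real.rpow_nonneg hp₁0 (1 / (cfw:ℝ))
    positivity
  -- bound on prob of "A₁ ⊆ F" type events
  have hsingle : ∀ A₁ A₂ : Finset ι, A₁ ⊆ C₁ → A₂ ⊆ C₂ →
      prob μ (fun F => A₁ ⊆ F ∧ A₂ ⊆ F) ≤ p₁ ^ A₁.card * p₂ ^ A₂.card := by
    intro A₁ A₂ h₁ h₂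
    refine le_trans (prob_mono μ hμ0 ?_) (hls A₁ h₁ A₂ h₂)
    intro F hF
    exact ⟨Finset.subset_inter hF.1 h₁, Finset.subset_inter hF.2 h₂⟩
  -- bound prob E₁
  have hE₁bound : prob μ E₁ ≤ Y ^ a := by
    calc prob μ E₁ ≤ ∑ A₁ ∈ (Λ ∩ C₁).powersetCard k₀, prob μ (fun F => A₁ ⊆ F) :=
        prob_exists_le μ hμ0 _ _
    _ ≤ ∑ A₁ ∈ (Λ ∩ C₁).powersetCard k₀, p₁ ^ k₀ := by
        apply Finset.sum_le_sum
        intro A₁ hA₁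
        rw [Finset.mem_powersetCard] at hA₁
        have h₁ : A₁ ⊆ C₁ := hA₁.1.trans (Finset.inter_subset_right)
        have := hsingle A₁ ∅ h₁ (Finset.empty_subset _)
        simp only [Finset.card_empty, pow_zero, mul_one, Finset.empty_subset, and_true] at this
        rw [← hA₁.2]
        exact this
    _ = (L₁.choose k₀ : ℝ) * p₁ ^ k₀ := by
        rw [Finset.sum_const, Finset.card_powersetCard, nsmul_eq_mul]
    _ ≤ (2:ℝ) ^ (cbw₁ * a) * p₁ ^ k₀ := by
        apply mul_le_mul_of_nonneg_right _ (by positivity)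
        refine le_trans ?_ (pow_le_pow_right₀ (by norm_num) hL₁)
        exact_mod_cast choose_le_two_pow L₁ k₀
    _ ≤ (2:ℝ) ^ (cbw₁ * a) * (p₁ ^ ((1:ℝ) / (cfw:ℝ))) ^ a := by
        apply mul_le_mul_of_nonneg_left _ (by positivity)
        exact rpow_key p₁ hp₁0 hp₁1 cfw k₀ a hcfw ha1 hak₀
    _ = Y ^ a := by
        rw [hY_def, mul_pow, ← pow_mul]
  -- bound prob E₂
  have hE₂bound : prob μ E₂ ≤ X ^ a := by
    have step1 : prob μ E₂ ≤ ∑ m ∈ Finset.range k₀,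
        (L₁.choose m : ℝ) * (L₂.choose (k₀ - m) : ℝ) * (p₁ ^ m * p₂ ^ (k₀ - m)) := by
      calc prob μ E₂ ≤ ∑ m ∈ Finset.range k₀, prob μ (fun F =>
          ∃ P ∈ (Λ ∩ C₁).powersetCard m ×ˢ (Λ ∩ C₂).powersetCard (k₀ - m),
            P.1 ⊆ F ∧ P.2 ⊆ F) := prob_exists_le μ hμ0 _ _
      _ ≤ ∑ m ∈ Finset.range k₀,
          (L₁.choose m : ℝ) * (L₂.choose (k₀ - m) : ℝ) * (p₁ ^ m * p₂ ^ (k₀ - m)) := by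
          apply Finset.sum_le_sum
          intro m _
          calc prob μ (fun F =>
              ∃ P ∈ (Λ ∩ C₁).powersetCard m ×ˢ (Λ ∩ C₂).powersetCard (k₀ - m),
                P.1 ⊆ F ∧ P.2 ⊆ F)
              ≤ ∑ P ∈ (Λ ∩ C₁).powersetCard m ×ˢ (Λ ∩ C₂).powersetCard (k₀ - m),
                prob μ (fun F => P.1 ⊆ F ∧ P.2 ⊆ F) := prob_exists_le μ hμ0 _ _
          _ ≤ ∑ P ∈ (Λ ∩ C₁).powersetCard m ×ˢ (Λ ∩ C₂).powersetCard (k₀ - m),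
                p₁ ^ m * p₂ ^ (k₀ - m) := by
              apply Finset.sum_le_sum
              intro P hP
              rw [Finset.mem_product] at hP
              rw [Finset.mem_powersetCard] at hP
              obtain ⟨⟨hP1s, hP1c⟩, hP2⟩ := hP
              rw [Finset.mem_powersetCard] at hP2
              obtain ⟨hP2s, hP2c⟩ := hP2
              have := hsingle P.1 P.2 (hP1s.trans Finset.inter_subset_right)
                (hP2s.trans Finset.inter_subset_right)
              rw [hP1c, hP2c] at this
              exact this
          _ = (L₁.choose m : ℝ) * (L₂.choose (k₀ - m) : ℝ) * (p₁ ^ m * p₂ ^ (k₀ - m)) := by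
              rw [Finset.sum_const, Finset.card_product, Finset.card_powersetCard,
                Finset.card_powersetCard, nsmul_eq_mul]
              push_cast
              ring
    have step2 : ∑ m ∈ Finset.range k₀,
        (L₁.choose m : ℝ) * (L₂.choose (k₀ - m) : ℝ) * (p₁ ^ m * p₂ ^ (k₀ - m))
        ≤ (2:ℝ) ^ (cbw₂ * a) * (p₂ ^ k₀ * ∑ m ∈ Finset.range k₀,
            (L₁.choose m : ℝ) * (p₁ / p₂) ^ m) := by
      rw [Finset.mul_sum, Finset.mul_sum]
      apply Finset.sum_le_sum
      intro m hm
      rw [Finset.mem_range] at hm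
      have hpow : p₂ ^ k₀ * ((L₁.choose m : ℝ) * (p₁ / p₂) ^ m)
          = (L₁.choose m : ℝ) * (p₁ ^ m * p₂ ^ (k₀ - m)) := by
        rw [div_pow]
        have : p₂ ^ k₀ = p₂ ^ (k₀ - m) * p₂ ^ m := by
          rw [← pow_add]; congr 1; omega
        rw [this]
        field_simp
      rw [hpow]
      have hch : (L₂.choose (k₀ - m) : ℝ) ≤ (2:ℝ) ^ (cbw₂ * a) := by
        refine le_trans ?_ (pow_le_pow_right₀ (by norm_num) hL₂)
        exact_mod_cast choose_le_two_pow L₂ (k₀ - m)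
      calc (L₁.choose m : ℝ) * (L₂.choose (k₀ - m) : ℝ) * (p₁ ^ m * p₂ ^ (k₀ - m))
          ≤ (L₁.choose m : ℝ) * (2:ℝ) ^ (cbw₂ * a) * (p₁ ^ m * p₂ ^ (k₀ - m)) := by
            apply mul_le_mul_of_nonneg_right _ (by positivity)
            exact mul_le_mul_of_nonneg_left hch (by positivity)
      _ = (2:ℝ) ^ (cbw₂ * a) * ((L₁.choose m : ℝ) * (p₁ ^ m * p₂ ^ (k₀ - m))) := by ring
    have step3 : ∑ m ∈ Finset.range k₀, (L₁.choose m : ℝ) * (p₁ / p₂) ^ m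
        ≤ (1 + p₁ / p₂) ^ (cbw₁ * a) := by
      refine le_trans (sum_choose_le _ hp₁p₂ _ _) (pow_le_pow_right₀ (by linarith) hL₁)
    calc prob μ E₂ ≤ (2:ℝ) ^ (cbw₂ * a) * (p₂ ^ k₀ * ∑ m ∈ Finset.range k₀,
            (L₁.choose m : ℝ) * (p₁ / p₂) ^ m) := le_trans step1 step2
    _ ≤ (2:ℝ) ^ (cbw₂ * a) * (p₂ ^ k₀ * (1 + p₁ / p₂) ^ (cbw₁ * a)) := by
        apply mul_le_mul_of_nonneg_left _ (by positivity)
        exact mul_le_mul_of_nonneg_left step3 (by positivity)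
    _ ≤ (2:ℝ) ^ (cbw₂ * a) * ((p₂ ^ ((1:ℝ) / (cfw:ℝ))) ^ a * (1 + p₁ / p₂) ^ (cbw₁ * a)) := by
        apply mul_le_mul_of_nonneg_left _ (by positivity)
        apply mul_le_mul_of_nonneg_right _ (by positivity)
        exact rpow_key p₂ hp₂0.le hp₂1 cfw k₀ a hcfw ha1 hak₀
    _ = X ^ a := by
        rw [hX_def, mul_pow, mul_pow, ← pow_mul, ← pow_mul]
        ring
  -- combine
  calc prob μ (fun F => A' ⊆ Γ F) ≤ prob μ (fun F => E₁ F ∨ E₂ F) :=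
      prob_mono μ hμ0 hsplit
  _ ≤ prob μ E₁ + prob μ E₂ := prob_or_le μ hμ0 E₁ E₂
  _ ≤ Y ^ a + X ^ a := add_le_add hE₁bound hE₂bound
  _ ≤ (Y + X) ^ a := pow_add_pow_le hYnn hXnn (by omega)
  _ = (X + Y) ^ a := by rw [add_comm]
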